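/- arXiv:2512.13547 — 6 statements merged into one kernel-verified Lean document; each statement's English description precedes it below -/
import Mathlib

section
/- Let {V_k}, {U_k}, {S_k} be nonnegative real sequences, {μ_k}, {ν_k}, {ω_k} nonnegative, and {τ_k} integers with 0 ≤ τ_k ≤ τ for a fixed τ ≥ 1. Suppose V_{k+1} ≤ V_k - U_k + μ_k ∑_{l=max(k-τ_k+1,0)}^{k} S_l - ν_k S_k + ω_k for all k ≥ 0, and ∑_{l=0}^{τ-1} μ_{k+l} ≤ ν_k for all k. Then for every K, ∑_{k=0}^{K} U_k ≤ V_0 + ∑_{k=0}^{K} ω_k and V_{K+1} ≤ V_0 + ∑_{k=0}^{K} ω_k. -/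
/-!
Summing the recursion telescopes to `V (K+1) + ∑ U ≤ V 0 + ∑ μ_k (window sum of S) - ∑ ν_k S_k + ∑ ω`.
Exchanging the order of summation in the delayed term, each `S_l` is charged only by the steps
`l ≤ k < l + τ` whose window contains `l`, so its total coefficient is at most
`∑_{j<τ} μ_{l+j} ≤ ν_l`; the delayed terms are therefore absorbed by the `-ν_k S_k` terms.
-/

open Finset

theorem add_sum_range_le_of_succ_add_le {M : Type*} [AddCommMonoid M] [PartialOrder M]
    [IsOrderedAddMonoid M] (V U a : ℕ → M) (h : ∀ k, V (k + 1) + U k ≤ V k + a k) (N : ℕ) :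
    V N + ∑ k ∈ range N, U k ≤ V 0 + ∑ k ∈ range N, a k := by
  induction N with
  | zero => simp
  | succ N ih =>
    calc V (N + 1) + ∑ k ∈ range (N + 1), U k
        = (V (N + 1) + U N) + ∑ k ∈ range N, U k := by rw [sum_range_succ]; abel
      _ ≤ (V N + a N) + ∑ k ∈ range N, U k := add_le_add_left (h N) _
      _ = (V N + ∑ k ∈ range N, U k) + a N := by abel
      _ ≤ (V 0 + ∑ k ∈ range N, a k) + a N := by gcongr
      _ = V 0 + ∑ k ∈ range (N + 1), a k := by rw [sum_range_succ, add_assoc]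

theorem sum_range_sum_Icc_sub_eq_sum_range_sum_Ico {M : Type*} [AddCommMonoid M]
    (f : ℕ → ℕ → M) (N τ : ℕ) :
    ∑ k ∈ range N, ∑ l ∈ Icc (k + 1 - τ) k, f k l =
      ∑ l ∈ range N, ∑ k ∈ Ico l (min (l + τ) N), f k l :=
  sum_comm' fun k l => by simp only [mem_range, mem_Icc, mem_Ico]; omega

section OrderedSemiring

variable {R : Type*} [Semiring R] [PartialOrder R] [IsOrderedRing R]

theorem sum_Icc_sub_le_sum_Icc_sub {S : ℕ → R} (hS : ∀ l, 0 ≤ S l) {d τ : ℕ} (hd : d ≤ τ)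
    (k : ℕ) : ∑ l ∈ Icc (k + 1 - d) k, S l ≤ ∑ l ∈ Icc (k + 1 - τ) k, S l :=
  sum_le_sum_of_subset_of_nonneg (Icc_subset_Icc_left (Nat.sub_le_sub_left hd _))
    fun l _ _ => hS l

theorem sum_range_mul_sum_delayed_le {μ S : ℕ → R} (hμ : ∀ k, 0 ≤ μ k) (hS : ∀ l, 0 ≤ S l)
    {d : ℕ → ℕ} {τ : ℕ} (hd : ∀ k, d k ≤ τ) (N : ℕ) :
    ∑ k ∈ range N, μ k * ∑ l ∈ Icc (k + 1 - d k) k, S l ≤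
      ∑ l ∈ range N, (∑ j ∈ range τ, μ (l + j)) * S l := by
  calc ∑ k ∈ range N, μ k * ∑ l ∈ Icc (k + 1 - d k) k, S l
      ≤ ∑ k ∈ range N, ∑ l ∈ Icc (k + 1 - τ) k, μ k * S l := by
        gcongr with k
        rw [← mul_sum]
        exact mul_le_mul_of_nonneg_left (sum_Icc_sub_le_sum_Icc_sub hS (hd k) k) (hμ k)
    _ = ∑ l ∈ range N, ∑ k ∈ Ico l (min (l + τ) N), μ k * S l :=
        sum_range_sum_Icc_sub_eq_sum_range_sum_Ico _ N τ
    _ ≤ ∑ l ∈ range N, ∑ k ∈ Ico l (l + τ), μ k * S l := by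
        refine sum_le_sum fun l _ => ?_
        exact sum_le_sum_of_subset_of_nonneg (Ico_subset_Ico_right (min_le_left _ _))
          fun k _ _ => mul_nonneg (hμ k) (hS l)
    _ = ∑ l ∈ range N, (∑ j ∈ range τ, μ (l + j)) * S l := by
        simp only [← sum_mul, sum_Ico_eq_sum_range, add_tsub_cancel_left]

end OrderedSemiring

theorem delayed_recursion_partial_sum_bounds_general
    (V U S μ ν ω : ℕ → ℝ) (τk : ℕ → ℕ) (τ : ℕ)
    (hV : ∀ k, 0 ≤ V k) (hU : ∀ k, 0 ≤ U k) (hS : ∀ k, 0 ≤ S k)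
    (hμ : ∀ k, 0 ≤ μ k)
    (hτk : ∀ k, τk k ≤ τ)
    (hrec : ∀ k, V (k+1) ≤ V k - U k + μ k * (∑ l ∈ Finset.Icc (k + 1 - τk k) k, S l)
        - ν k * S k + ω k)
    (hcouple : ∀ k, (∑ l ∈ Finset.range τ, μ (k + l)) ≤ ν k) :
    ∀ K : ℕ, (∑ k ∈ Finset.range (K+1), U k) ≤ V 0 + (∑ k ∈ Finset.range (K+1), ω k) ∧
      V (K+1) ≤ V 0 + (∑ k ∈ Finset.range (K+1), ω k) := by
  intro K
  set N := K + 1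
  have telescoped := add_sum_range_le_of_succ_add_le V U
    (fun k => μ k * ∑ l ∈ Icc (k + 1 - τk k) k, S l - ν k * S k + ω k)
    (fun k => by linarith [hrec k]) N
  simp only [sum_add_distrib, sum_sub_distrib] at telescoped
  have absorbed : ∑ k ∈ range N, μ k * ∑ l ∈ Icc (k + 1 - τk k) k, S l ≤
      ∑ l ∈ range N, ν l * S l :=
    (sum_range_mul_sum_delayed_le hμ hS hτk N).trans
      (sum_le_sum fun l _ => mul_le_mul_of_nonneg_right (hcouple l) (hS l))
  have hUsum : 0 ≤ ∑ k ∈ range N, U k := sum_nonneg fun k _ => hU k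
  exact ⟨by linarith [hV N], by linarith⟩

theorem delayed_recursion_partial_sum_bounds
    (V U S μ ν ω : ℕ → ℝ) (τk : ℕ → ℕ) (τ : ℕ) (hτ : 1 ≤ τ)
    (hV : ∀ k, 0 ≤ V k) (hU : ∀ k, 0 ≤ U k) (hS : ∀ k, 0 ≤ S k)
    (hμ : ∀ k, 0 ≤ μ k) (hν : ∀ k, 0 ≤ ν k) (hω : ∀ k, 0 ≤ ω k)
    (hτk : ∀ k, τk k ≤ τ)
    (hrec : ∀ k, V (k+1) ≤ V k - U k + μ k * (∑ l ∈ Finset.Icc (k + 1 - τk k) k, S l)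
        - ν k * S k + ω k)
    (hcouple : ∀ k, (∑ l ∈ Finset.range τ, μ (k + l)) ≤ ν k) :
    ∀ K : ℕ, (∑ k ∈ Finset.range (K+1), U k) ≤ V 0 + (∑ k ∈ Finset.range (K+1), ω k) ∧
      V (K+1) ≤ V 0 + (∑ k ∈ Finset.range (K+1), ω k) :=
  delayed_recursion_partial_sum_bounds_general V U S μ ν ω τk τ hV hU hS hμ hτk hrec hcouple
end

section
/- Let τ ≥ 1 be fixed, {τ_k} a sequence of integers with 0 ≤ τ_k ≤ τ, s a real with t_k := t_0 + k satisfying t_0 > s, and {Z_k} a nonnegative real sequence with ∑_{k=0}^∞ t_k (t_k - s) Z_k < ∞. Then ∑_{k=0}^∞ t_k (t_k - s) ∑_{l=max(k-τ_k+1,0)}^{k} Z_l < ∞. -/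
/-!
With `w k = t k * (t k - s)`, moving the index by at most `τ` changes the weight by at most the
factor `C = (1 + τ / (t0 - s)) ^ 2`, because `t k ≥ t k - s ≥ t0 - s > 0`. Hence the `k`-th term
is dominated by `C * ∑_{j < τ} w (k - j) * Z (k - j)`, a finite sum of shifts of a summable series.
-/

open Finset

theorem add_le_one_add_div_mul {y c d D : ℝ} (hc : 0 < c) (hcy : c ≤ y) (hd : d ≤ D)
    (hD : 0 ≤ D) : y + d ≤ (1 + D / c) * y := by
  have hD_le : D ≤ D / c * y := by
    rw [div_mul_eq_mul_div, le_div_iff₀ hc]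
    nlinarith
  linarith

theorem add_mul_add_sub_le {x s c d D : ℝ} (hs : 0 ≤ s) (hc : 0 < c) (hcx : c ≤ x - s)
    (hd₀ : 0 ≤ d) (hd : d ≤ D) :
    (x + d) * (x + d - s) ≤ (1 + D / c) ^ 2 * (x * (x - s)) := by
  have hD : 0 ≤ D := hd₀.trans hd
  have hx : x + d ≤ (1 + D / c) * x := add_le_one_add_div_mul hc (by linarith) hd hD
  have hxs : x - s + d ≤ (1 + D / c) * (x - s) := add_le_one_add_div_mul hc hcx hd hD
  calc (x + d) * (x + d - s) = (x + d) * (x - s + d) := by ring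
    _ ≤ ((1 + D / c) * x) * ((1 + D / c) * (x - s)) :=
        mul_le_mul hx hxs (by linarith) (mul_nonneg (by positivity) (by linarith))
    _ = (1 + D / c) ^ 2 * (x * (x - s)) := by ring

theorem summable_mul_comp_sub {a f : ℕ → ℝ} {C : ℝ} (j : ℕ) (ha : ∀ n, 0 ≤ a n)
    (hf : ∀ n, 0 ≤ f n) (hshift : ∀ n, a (n + j) ≤ C * a n)
    (h : Summable fun n => a n * f n) : Summable fun k => a k * f (k - j) := by
  rw [← summable_nat_add_iff j]
  simp only [Nat.add_sub_cancel]
  refine (h.mul_left C).of_nonneg_of_le (fun n => mul_nonneg (ha _) (hf n)) fun n => ?_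
  rw [← mul_assoc]
  exact mul_le_mul_of_nonneg_right (hshift n) (hf n)

theorem sum_Icc_sub_le_sum_range {Z : ℕ → ℝ} (hZ : ∀ n, 0 ≤ Z n) (k m : ℕ) :
    ∑ l ∈ Icc (k + 1 - m) k, Z l ≤ ∑ j ∈ range m, Z (k - j) := by
  have hsub : Icc (k + 1 - m) k ⊆ (range m).image (k - ·) := by
    intro l hl
    rw [mem_Icc] at hl
    exact mem_image.mpr ⟨k - l, mem_range.mpr (by omega), by omega⟩
  calc ∑ l ∈ Icc (k + 1 - m) k, Z l ≤ ∑ l ∈ (range m).image (k - ·), Z l :=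
        sum_le_sum_of_subset_of_nonneg hsub fun l _ _ => hZ l
    _ ≤ ∑ j ∈ range m, Z (k - j) := sum_image_le_of_nonneg fun l _ => hZ l

theorem summable_delayed_weighted_sum_general
    (τ : ℕ) (τk : ℕ → ℕ) (hτk : ∀ k, τk k ≤ τ)
    (s t0 : ℝ) (hs : 0 < s) (ht0 : s < t0)
    (t : ℕ → ℝ) (ht : ∀ k, t k = t0 + k)
    (Z : ℕ → ℝ) (hZ : ∀ k, 0 ≤ Z k)
    (hsum : Summable (fun k => t k * (t k - s) * Z k)) :
    Summable (fun k => t k * (t k - s) * ∑ l ∈ Finset.Icc (k + 1 - τk k) k, Z l) := by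
  set w : ℕ → ℝ := fun k => t k * (t k - s)
  have hgap : ∀ k, t0 - s ≤ t k - s := fun k => by rw [ht]; linarith [k.cast_nonneg (α := ℝ)]
  have hw : ∀ k, 0 ≤ w k := fun k => mul_nonneg (by linarith [hgap k]) (by linarith [hgap k])
  have hshift : ∀ j < τ, ∀ n, w (n + j) ≤ (1 + τ / (t0 - s)) ^ 2 * w n := fun j hj n => by
    have hj' : (j : ℝ) ≤ τ := by exact_mod_cast hj.le
    simpa only [w, ht, Nat.cast_add, ← add_assoc] using
      add_mul_add_sub_le hs.le (sub_pos.mpr ht0) (hgap n) j.cast_nonneg hj'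
  have hdom : Summable fun k => ∑ j ∈ range τ, w k * Z (k - j) :=
    summable_sum fun j hj => summable_mul_comp_sub j hw hZ (hshift j (mem_range.mp hj)) hsum
  refine hdom.of_nonneg_of_le (fun k => mul_nonneg (hw k) (sum_nonneg fun l _ => hZ l))
    fun k => ?_
  calc w k * ∑ l ∈ Icc (k + 1 - τk k) k, Z l ≤ w k * ∑ l ∈ Icc (k + 1 - τ) k, Z l :=
        mul_le_mul_of_nonneg_left (sum_le_sum_of_subset_of_nonneg
          (Icc_subset_Icc_left (by have := hτk k; omega)) fun l _ _ => hZ l) (hw k)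
    _ ≤ ∑ j ∈ range τ, w k * Z (k - j) := by
        rw [← mul_sum]
        exact mul_le_mul_of_nonneg_left (sum_Icc_sub_le_sum_range hZ k τ) (hw k)

theorem summable_delayed_weighted_sum
    (τ : ℕ) (hτ : 1 ≤ τ) (τk : ℕ → ℕ) (hτk : ∀ k, τk k ≤ τ)
    (s t0 : ℝ) (hs : 0 < s) (ht0 : s < t0)
    (t : ℕ → ℝ) (ht : ∀ k, t k = t0 + k)
    (Z : ℕ → ℝ) (hZ : ∀ k, 0 ≤ Z k)
    (hsum : Summable (fun k => t k * (t k - s) * Z k)) :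
    Summable (fun k => t k * (t k - s) * ∑ l ∈ Finset.Icc (k + 1 - τk k) k, Z l) :=
  summable_delayed_weighted_sum_general τ τk hτk s t0 hs ht0 t ht Z hZ hsum
end

section
/- Let G_1, ..., G_n : ℝ^p → ℝ^p be maps, G := (1/n)∑_i G_i, and let {y_k} be a sequence with y_l = y_0 for l ≤ 0. For delays τ_{i,k} with 0 ≤ τ_{i,k} ≤ τ, the inconsistent-read estimator G̃_k := (1/n)∑_{i=1}^n G_i y_{k - τ_{i,k}} satisfies ‖G̃_k - G y_k‖² ≤ (τ/n) ∑_{l=max(k-τ+1,0)}^{k} ∑_{i=1}^{n} ‖G_i y_l - G_i y_{l-1}‖². -/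
/-!
Write each delayed read as `G_i y_{k-τ_{i,k}} = G_i y_k - ∑ (G_i y_l - G_i y_{l-1})`, the sum running
over the at most `τ` indices `l ∈ (max (k - τ_{i,k}) 0, k]`: below `0` the sequence is constant, so the
telescoping sum may stop there. Jensen's inequality `‖∑_{j ∈ s} v_j‖² ≤ #s ∑_{j ∈ s} ‖v_j‖²`, applied once
to the average over `i` and once to each telescoping sum, gives the bound.
-/

open Finset

theorem norm_sum_sq_le_card_mul_sum_norm_sq {ι E : Type*} [SeminormedAddCommGroup E]
    (s : Finset ι) (v : ι → E) :
    ‖∑ j ∈ s, v j‖ ^ 2 ≤ #s * ∑ j ∈ s, ‖v j‖ ^ 2 :=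
  calc ‖∑ j ∈ s, v j‖ ^ 2 ≤ (∑ j ∈ s, ‖v j‖) ^ 2 := by gcongr; exact norm_sum_le s v
    _ ≤ #s * ∑ j ∈ s, ‖v j‖ ^ 2 := sq_sum_le_card_mul_sum_sq

theorem norm_inv_card_smul_sum_sq_le {ι E : Type*} [SeminormedAddCommGroup E] [NormedSpace ℝ E]
    (s : Finset ι) (v : ι → E) :
    ‖(#s : ℝ)⁻¹ • ∑ j ∈ s, v j‖ ^ 2 ≤ (#s : ℝ)⁻¹ * ∑ j ∈ s, ‖v j‖ ^ 2 := by
  rcases s.eq_empty_or_nonempty with rfl | hs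
  · simp
  have hcard : (0 : ℝ) < #s := by exact_mod_cast hs.card_pos
  calc ‖(#s : ℝ)⁻¹ • ∑ j ∈ s, v j‖ ^ 2 = (#s : ℝ)⁻¹ ^ 2 * ‖∑ j ∈ s, v j‖ ^ 2 := by
        rw [norm_smul, mul_pow, Real.norm_of_nonneg (by positivity)]
    _ ≤ (#s : ℝ)⁻¹ ^ 2 * (#s * ∑ j ∈ s, ‖v j‖ ^ 2) := by
        gcongr; exact norm_sum_sq_le_card_mul_sum_norm_sq s v
    _ = (#s : ℝ)⁻¹ * ∑ j ∈ s, ‖v j‖ ^ 2 := by field_simp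

theorem Int.sum_Ioc_sub_sub_one {M : Type*} [AddCommGroup M] (f : ℤ → M) {a b : ℤ} (hab : a ≤ b) :
    ∑ l ∈ Ioc a b, (f l - f (l - 1)) = f b - f a := by
  induction b, hab using Int.leInduction with
  | base => simp
  | succ b hab ih =>
    rw [← insert_Ioc_right_eq_Ioc_add_one hab, sum_insert (by simp), ih, add_sub_cancel_right]
    abel

theorem norm_sub_delayed_sq_le {E : Type*} [SeminormedAddCommGroup E] (f : ℤ → E)
    (hf : ∀ l : ℤ, l ≤ 0 → f l = f 0) (k : ℕ) {d τ : ℕ} (hd : d ≤ τ) :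
    ‖f ((k : ℤ) - d) - f k‖ ^ 2 ≤
      τ * ∑ l ∈ Icc (max ((k : ℤ) - τ + 1) 0) (k : ℤ), ‖f l - f (l - 1)‖ ^ 2 := by
  set b : ℤ := max ((k : ℤ) - d) 0
  have hfb : f ((k : ℤ) - d) = f b := by
    rcases le_total ((k : ℤ) - d) 0 with h | h
    · rw [hf _ h, show b = 0 by omega]
    · rw [show b = (k : ℤ) - d by omega]
  have hcard : (#(Ioc b k) : ℝ) ≤ τ := by
    rw [Int.card_Ioc]; exact_mod_cast (by omega : (k - b).toNat ≤ τ)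
  have hsub : Ioc b k ⊆ Icc (max ((k : ℤ) - τ + 1) 0) (k : ℤ) := by
    intro l; simp only [mem_Ioc, mem_Icc]; omega
  calc ‖f ((k : ℤ) - d) - f k‖ ^ 2 = ‖∑ l ∈ Ioc b k, (f l - f (l - 1))‖ ^ 2 := by
        rw [norm_sub_rev, hfb, Int.sum_Ioc_sub_sub_one f (by omega)]
    _ ≤ #(Ioc b k) * ∑ l ∈ Ioc b k, ‖f l - f (l - 1)‖ ^ 2 :=
        norm_sum_sq_le_card_mul_sum_norm_sq _ _
    _ ≤ τ * ∑ l ∈ Icc (max ((k : ℤ) - τ + 1) 0) (k : ℤ), ‖f l - f (l - 1)‖ ^ 2 := by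
        gcongr

theorem inconsistent_read_error_bound_general
    {E : Type*} [NormedAddCommGroup E] [InnerProductSpace ℝ E]
    (n : ℕ) (Gi : Fin n → E → E)
    (y : ℤ → E) (hy : ∀ l : ℤ, l ≤ 0 → y l = y 0)
    (τ : ℕ) (k : ℕ) (τik : Fin n → ℕ) (hτik : ∀ i, τik i ≤ τ) :
    ‖(n : ℝ)⁻¹ • (∑ i : Fin n, Gi i (y ((k : ℤ) - τik i)))
        - (n : ℝ)⁻¹ • (∑ i : Fin n, Gi i (y (k : ℤ)))‖^2 ≤
      ((τ : ℝ) / n) * ∑ l ∈ Finset.Icc (max ((k : ℤ) - τ + 1) 0) (k : ℤ),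
        ∑ i : Fin n, ‖Gi i (y l) - Gi i (y (l - 1))‖^2 := by
  calc ‖(n : ℝ)⁻¹ • (∑ i : Fin n, Gi i (y ((k : ℤ) - τik i)))
          - (n : ℝ)⁻¹ • (∑ i : Fin n, Gi i (y (k : ℤ)))‖ ^ 2
        = ‖(n : ℝ)⁻¹ • ∑ i : Fin n, (Gi i (y ((k : ℤ) - τik i)) - Gi i (y k))‖ ^ 2 := by
        rw [sum_sub_distrib, smul_sub]
    _ ≤ (n : ℝ)⁻¹ * ∑ i : Fin n, ‖Gi i (y ((k : ℤ) - τik i)) - Gi i (y k)‖ ^ 2 := by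
        simpa using norm_inv_card_smul_sum_sq_le univ
          fun i : Fin n => Gi i (y ((k : ℤ) - τik i)) - Gi i (y k)
    _ ≤ (n : ℝ)⁻¹ * ∑ i : Fin n, (τ * ∑ l ∈ Icc (max ((k : ℤ) - τ + 1) 0) (k : ℤ),
          ‖Gi i (y l) - Gi i (y (l - 1))‖ ^ 2) := by
        gcongr with i
        exact norm_sub_delayed_sq_le (fun l => Gi i (y l))
          (fun l hl => by rw [hy l hl]) k (hτik i)
    _ = _ := by rw [← mul_sum, sum_comm, div_eq_inv_mul]; ring

theorem inconsistent_read_error_bound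
    {E : Type*} [NormedAddCommGroup E] [InnerProductSpace ℝ E]
    (n : ℕ) (hn : 1 ≤ n) (Gi : Fin n → E → E)
    (y : ℤ → E) (hy : ∀ l : ℤ, l ≤ 0 → y l = y 0)
    (τ : ℕ) (hτ : 1 ≤ τ) (k : ℕ) (τik : Fin n → ℕ) (hτik : ∀ i, τik i ≤ τ) :
    ‖(n : ℝ)⁻¹ • (∑ i : Fin n, Gi i (y ((k : ℤ) - τik i)))
        - (n : ℝ)⁻¹ • (∑ i : Fin n, Gi i (y (k : ℤ)))‖^2 ≤
      ((τ : ℝ) / n) * ∑ l ∈ Finset.Icc (max ((k : ℤ) - τ + 1) 0) (k : ℤ),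
        ∑ i : Fin n, ‖Gi i (y l) - Gi i (y (l - 1))‖^2 :=
  inconsistent_read_error_bound_general n Gi y hy τ k τik hτik
end

section
/- Let s ≥ 1 + 3γ with γ ∈ (0,1], η > 0, t_{k-1} > s, η_{k-1} := η t_{k-1}/(2(t_{k-1} - s)), a_k := η_{k-1} t_{k-1}(t_{k-1} - s) and β ≥ 0. For vectors g, u, z, x⋆ in an inner product space with ⟪g, u - x⋆⟫ ≥ β‖g‖², the quantity L := (a_k/2)‖g‖² + s t_{k-1} ⟪g, u - z⟫ + (s²(s-1)/(2 η_{k-1} γ))‖z - x⋆‖² satisfies L ≥ (η t_{k-1}²/8)‖g‖² + (s²(t_{k-1} - 3s)/(η t_{k-1}))‖z - x⋆‖². -/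
/-!
Write `⟪g, u - z⟫ = ⟪g, u - x⋆⟫ - ⟪g, z - x⋆⟫`. The first term is nonnegative by co-coercivity, and the
second is absorbed by completing the square, `8 s η t ⟪g, z - x⋆⟫ ≤ η² t² ‖g‖² + 16 s² ‖z - x⋆‖²`.
This uses up half of the `‖g‖²` coefficient `a_k / 2 = η t² / 4` and `2 s² / η` of the `‖z - x⋆‖²`
coefficient; what is left of the latter dominates `s² (t - 3s) / (η t)` because `s - 1 ≥ 3γ`.
-/

open RealInnerProductSpace

theorem two_mul_mul_inner_le_sq_mul_norm_sq_add {E : Type*} [NormedAddCommGroup E]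
    [InnerProductSpace ℝ E] (a b : ℝ) (v w : E) :
    2 * a * b * ⟪v, w⟫ ≤ a ^ 2 * ‖v‖ ^ 2 + b ^ 2 * ‖w‖ ^ 2 := by
  have h := norm_sub_sq_real (a • v) (b • w)
  rw [norm_smul, norm_smul, real_inner_smul_left, real_inner_smul_right, mul_pow, mul_pow,
    Real.norm_eq_abs, Real.norm_eq_abs, sq_abs, sq_abs] at h
  nlinarith [sq_nonneg ‖a • v - b • w‖]

section StepSize

variable {η s t : ℝ}

theorem stepSize_mul_eq (hst : s < t) :
    η * t / (2 * (t - s)) * t * (t - s) = η * t ^ 2 / 2 := by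
  field_simp [(sub_pos.2 hst).ne']

theorem div_two_mul_stepSize_eq (c γ : ℝ) (hst : s < t) :
    c / (2 * (η * t / (2 * (t - s))) * γ) = c * (t - s) / (η * t * γ) := by
  field_simp [(sub_pos.2 hst).ne']

end StepSize

theorem mul_mul_inner_le_of_pos {E : Type*} [NormedAddCommGroup E] [InnerProductSpace ℝ E]
    {η : ℝ} (hη : 0 < η) (s t : ℝ) (v w : E) :
    s * t * ⟪v, w⟫ ≤ η * t ^ 2 / 8 * ‖v‖ ^ 2 + 2 * s ^ 2 / η * ‖w‖ ^ 2 :=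
  calc s * t * ⟪v, w⟫ = 2 * (η * t) * (4 * s) * ⟪v, w⟫ / (8 * η) := by field_simp; ring
    _ ≤ ((η * t) ^ 2 * ‖v‖ ^ 2 + (4 * s) ^ 2 * ‖w‖ ^ 2) / (8 * η) := by
      gcongr; exact two_mul_mul_inner_le_sq_mul_norm_sq_add _ _ v w
    _ = η * t ^ 2 / 8 * ‖v‖ ^ 2 + 2 * s ^ 2 / η * ‖w‖ ^ 2 := by field_simp; ring

theorem sq_mul_div_add_two_sq_div_le {γ s η t : ℝ} (hγ : 0 < γ) (hs : 1 + 3 * γ ≤ s)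
    (hη : 0 < η) (hst : s < t) :
    s ^ 2 * (t - 3 * s) / (η * t) + 2 * s ^ 2 / η ≤ s ^ 2 * (s - 1) * (t - s) / (η * t * γ) := by
  have ht : 0 < t := by linarith
  have hmargin : 3 * (t - s) ≤ (s - 1) * (t - s) / γ := by
    rw [le_div_iff₀ hγ]
    nlinarith [sub_pos.2 hst]
  calc s ^ 2 * (t - 3 * s) / (η * t) + 2 * s ^ 2 / η = s ^ 2 / (η * t) * (3 * (t - s)) := by
        field_simp; ring
    _ ≤ s ^ 2 / (η * t) * ((s - 1) * (t - s) / γ) := by gcongr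
    _ = s ^ 2 * (s - 1) * (t - s) / (η * t * γ) := by ring

theorem lyapunov_lower_bound_general
    {E : Type*} [NormedAddCommGroup E] [InnerProductSpace ℝ E]
    (γ s η tkm1 β : ℝ)
    (hγ0 : 0 < γ) (hs : 1 + 3 * γ ≤ s) (hη : 0 < η)
    (ht : s < tkm1) (hβ : 0 ≤ β)
    (ηkm1 ak : ℝ)
    (hηkm1 : ηkm1 = η * tkm1 / (2 * (tkm1 - s)))
    (hak : ak = ηkm1 * tkm1 * (tkm1 - s))
    (g u z xs : E)
    (hco : ⟪g, u - xs⟫ ≥ β * ‖g‖^2)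
    (L : ℝ)
    (hL : L = (ak / 2) * ‖g‖^2 + s * tkm1 * ⟪g, u - z⟫
        + (s^2 * (s - 1) / (2 * ηkm1 * γ)) * ‖z - xs‖^2) :
    L ≥ (η * tkm1^2 / 8) * ‖g‖^2 + (s^2 * (tkm1 - 3 * s) / (η * tkm1)) * ‖z - xs‖^2 := by
  have hs0 : 0 ≤ s := by linarith
  have hu : 0 ≤ ⟪g, u - xs⟫ := le_trans (by positivity) hco
  have hsplit : ⟪g, u - z⟫ = ⟪g, u - xs⟫ - ⟪g, z - xs⟫ := by
    rw [← inner_sub_right, sub_sub_sub_cancel_right]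
  have hcross := mul_mul_inner_le_of_pos hη s tkm1 g (z - xs)
  have hcoef := mul_le_mul_of_nonneg_right
    (sq_mul_div_add_two_sq_div_le hγ0 hs hη ht) (sq_nonneg ‖z - xs‖)
  rw [hL, hak, hηkm1, stepSize_mul_eq ht, div_two_mul_stepSize_eq _ _ ht, hsplit]
  linarith [mul_nonneg (mul_nonneg hs0 (hs0.trans ht.le)) hu]

theorem lyapunov_lower_bound
    {E : Type*} [NormedAddCommGroup E] [InnerProductSpace ℝ E]
    (γ s η tkm1 β : ℝ)
    (hγ0 : 0 < γ) (hγ1 : γ ≤ 1) (hs : 1 + 3 * γ ≤ s) (hη : 0 < η)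
    (ht : s < tkm1) (hβ : 0 ≤ β)
    (ηkm1 ak : ℝ)
    (hηkm1 : ηkm1 = η * tkm1 / (2 * (tkm1 - s)))
    (hak : ak = ηkm1 * tkm1 * (tkm1 - s))
    (g u z xs : E)
    (hco : ⟪g, u - xs⟫ ≥ β * ‖g‖^2)
    (L : ℝ)
    (hL : L = (ak / 2) * ‖g‖^2 + s * tkm1 * ⟪g, u - z⟫
        + (s^2 * (s - 1) / (2 * ηkm1 * γ)) * ‖z - xs‖^2) :
    L ≥ (η * tkm1^2 / 8) * ‖g‖^2 + (s^2 * (tkm1 - 3 * s) / (η * tkm1)) * ‖z - xs‖^2 :=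
  lyapunov_lower_bound_general γ s η tkm1 β hγ0 hs hη ht hβ ηkm1 ak hηkm1 hak g u z xs hco L hL
end

section
/- Let {X_k} be a nonnegative real sequence, and suppose for all k, X_{k+1} ≤ X_k - V_k + R_k where V_k ≥ 0, R_k ≥ 0 and ∑ R_k < ∞. Then {X_k} converges and ∑_{k=0}^∞ V_k < ∞. Moreover, if lim_{k} k^{α+1} X_k exists and ∑_k k^α X_k < ∞ for α > 0, then lim_k k^{α+1} X_k = 0. -/
theorem deterministic_supermartingale_and_rate
    (X V R : ℕ → ℝ)
    (hX : ∀ k, 0 ≤ X k) (hV : ∀ k, 0 ≤ V k) (hR : ∀ k, 0 ≤ R k)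
    (hrec : ∀ k, X (k+1) ≤ X k - V k + R k)
    (hRs : Summable R) :
    (∃ L : ℝ, Filter.Tendsto X Filter.atTop (nhds L)) ∧
    Summable V ∧
    (∀ α : ℝ, 0 < α →
      (∃ L : ℝ, Filter.Tendsto (fun k : ℕ => (k : ℝ)^(α+1) * X k) Filter.atTop (nhds L)) →
      Summable (fun k : ℕ => (k : ℝ)^α * X k) →
      Filter.Tendsto (fun k : ℕ => (k : ℝ)^(α+1) * X k) Filter.atTop (nhds 0)) := by
  set S : ℕ → ℝ := fun n => ∑ i ∈ Finset.range n, R i with hSdef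
  have hS : Filter.Tendsto S Filter.atTop (nhds (∑' i, R i)) :=
    hRs.hasSum.tendsto_sum_nat
  have hSle : ∀ n, S n ≤ ∑' i, R i := fun n =>
    Summable.sum_le_tsum (Finset.range n) (fun i _ => hR i) hRs
  set W : ℕ → ℝ := fun n => X n - S n with hWdef
  have hWanti : Antitone W := by
    apply antitone_nat_of_succ_le
    intro n
    have h1 : X (n+1) ≤ X n + R n := by
      have := hrec n; have := hV n; linarith
    have h2 : S (n+1) = S n + R n := Finset.sum_range_succ R n
    simp only [hWdef]; rw [h2]; linarith
  have hWbdd : BddBelow (Set.range W) := by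
    refine ⟨-(∑' i, R i), ?_⟩
    rintro x ⟨n, rfl⟩
    have := hX n; have := hSle n
    simp only [hWdef]; linarith
  have hWconv : Filter.Tendsto W Filter.atTop (nhds (⨅ n, W n)) :=
    tendsto_atTop_ciInf hWanti hWbdd
  have hXconv : Filter.Tendsto X Filter.atTop (nhds ((⨅ n, W n) + ∑' i, R i)) := by
    have : X = fun n => W n + S n := by funext n; simp [hWdef]
    rw [this]
    exact hWconv.add hS
  refine ⟨⟨_, hXconv⟩, ?_, ?_⟩
  · -- Summable V
    apply summable_of_sum_range_le hV (c := X 0 + ∑' i, R i)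
    intro n
    have key : ∀ n, ∑ i ∈ Finset.range n, V i ≤ X 0 - X n + S n := by
      intro n
      induction n with
      | zero => simp [hSdef]
      | succ m ih =>
        rw [Finset.sum_range_succ]
        have h2 : S (m+1) = S m + R m := Finset.sum_range_succ R m
        have := hrec m
        rw [h2]; linarith
    have := key n; have := hX n; have := hSle n
    linarith
  · rintro α hα ⟨L, hL⟩ hsum
    have hL0 : 0 ≤ L := by
      refine le_of_tendsto_of_tendsto' tendsto_const_nhds hL (fun k => ?_)
      exact mul_nonneg (Real.rpow_nonneg (Nat.cast_nonneg k) _) (hX k)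
    rcases eq_or_lt_of_le hL0 with h | hLpos
    · rwa [← h] at hL
    exfalso
    -- eventually (k:ℝ)^(α+1) * X k ≥ L/2
    have hev : ∀ᶠ k : ℕ in Filter.atTop, L/2 ≤ (k : ℝ)^(α+1) * X k :=
      hL.eventually (eventually_ge_nhds (by linarith : L/2 < L))
    rw [Filter.eventually_atTop] at hev
    obtain ⟨N, hN⟩ := hev
    have hN1 : ∀ k : ℕ, k ≥ N + 1 → L/2 * (1 / (k : ℝ)) ≤ (k : ℝ)^α * X k := by
      intro k hk
      have hkpos : (0 : ℝ) < k := by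
        exact_mod_cast Nat.lt_of_lt_of_le (Nat.succ_pos N) hk
      have h1 : L/2 ≤ (k : ℝ)^(α+1) * X k := hN k (le_trans (Nat.le_succ N) hk)
      have h2 : (k : ℝ)^(α+1) = (k : ℝ)^α * k := by
        rw [Real.rpow_add hkpos, Real.rpow_one]
      rw [h2] at h1
      calc L/2 * (1/(k:ℝ)) ≤ ((k:ℝ)^α * k * X k) * (1/(k:ℝ)) :=
            mul_le_mul_of_nonneg_right h1 (by positivity)
        _ = (k:ℝ)^α * X k := by field_simp
    -- summable comparison after shifting
    have hshift := (summable_nat_add_iff (N+1)).mpr hsum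
    have hcmp : Summable (fun k : ℕ => L/2 * (1 / ((k + (N+1) : ℕ) : ℝ))) := by
      refine Summable.of_nonneg_of_le (fun k => ?_) (fun k => ?_) hshift
      · positivity
      · exact hN1 (k + (N+1)) (Nat.le_add_left _ _)
    have hharm : Summable (fun k : ℕ => L/2 * (1 / (k : ℝ))) :=
      (summable_nat_add_iff (N+1)).mp hcmp
    have : Summable (fun k : ℕ => 1 / (k : ℝ)) := by
      have hne : L/2 ≠ 0 := by positivity
      exact (summable_mul_left_iff hne).mp hharm
    exact Real.not_summable_one_div_natCast this
end

section
/- Let G : ℝ^p → ℝ^p be continuous, {x_k} a sequence such that for every x⋆ with G x⋆ = 0 the sequence {‖x_k - x⋆‖²} converges, and ‖G x_k‖ → 0. If the zero set of G is nonempty and {x_k} is bounded (which follows from the convergence of ‖x_k - x⋆‖ for some zero x⋆), then {x_k} converges to a point x̄ with G x̄ = 0. -/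
/-!
The sequence stays in a ball around a zero of `G`, so by Bolzano–Weierstrass a subsequence
converges to some `x̄`, and `G x̄ = 0` by continuity since `‖G x_k‖ → 0`. Then `‖x_k - x̄‖`
converges, and its limit is `0` because it is `0` along the subsequence; hence `x_k → x̄`.
-/

open Filter Topology Metric

section Opial

variable {X : Type*} [MetricSpace X] {x : ℕ → X}

theorem isBounded_range_of_tendsto_dist {s : X} {L : ℝ}
    (h : Tendsto (fun k => dist (x k) s) atTop (𝓝 L)) : Bornology.IsBounded (Set.range x) := by
  obtain ⟨C, hC⟩ := h.bddAbove_range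
  refine (isBounded_iff_subset_closedBall s).2 ⟨C, ?_⟩
  rintro _ ⟨k, rfl⟩
  exact hC ⟨k, rfl⟩

theorem tendsto_of_tendsto_dist_of_tendsto_subseq {a : X} {L : ℝ} {φ : ℕ → ℕ}
    (hdist : Tendsto (fun k => dist (x k) a) atTop (𝓝 L)) (hφ : StrictMono φ)
    (hsub : Tendsto (x ∘ φ) atTop (𝓝 a)) : Tendsto x atTop (𝓝 a) := by
  have hL : L = 0 :=
    tendsto_nhds_unique (hdist.comp hφ.tendsto_atTop) (tendsto_iff_dist_tendsto_zero.1 hsub)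
  exact tendsto_iff_dist_tendsto_zero.2 (hL ▸ hdist)

/-- Opial's lemma in a proper metric space. -/
theorem exists_tendsto_of_tendsto_dist_of_subseq_limits_mem [ProperSpace X] {S : Set X}
    (hS : S.Nonempty) (hdist : ∀ s ∈ S, ∃ L, Tendsto (fun k => dist (x k) s) atTop (𝓝 L))
    (hlim : ∀ a (φ : ℕ → ℕ), StrictMono φ → Tendsto (x ∘ φ) atTop (𝓝 a) → a ∈ S) :
    ∃ a ∈ S, Tendsto x atTop (𝓝 a) := by
  obtain ⟨s, hs⟩ := hS
  obtain ⟨L, hL⟩ := hdist s hs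
  obtain ⟨a, -, φ, hφ, hsub⟩ :=
    tendsto_subseq_of_bounded (isBounded_range_of_tendsto_dist hL) (Set.mem_range_self (f := x))
  have ha : a ∈ S := hlim a φ hφ hsub
  obtain ⟨La, hLa⟩ := hdist a ha
  exact ⟨a, ha, tendsto_of_tendsto_dist_of_tendsto_subseq hLa hφ hsub⟩

end Opial

theorem opial_type_convergence
    (p : ℕ) (G : EuclideanSpace ℝ (Fin p) → EuclideanSpace ℝ (Fin p))
    (hG : Continuous G)
    (x : ℕ → EuclideanSpace ℝ (Fin p))
    (hzer : ∃ xs, G xs = 0)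
    (hfejer : ∀ xs, G xs = 0 →
      ∃ L : ℝ, Filter.Tendsto (fun k => ‖x k - xs‖^2) Filter.atTop (nhds L))
    (hres : Filter.Tendsto (fun k => ‖G (x k)‖) Filter.atTop (nhds 0)) :
    ∃ xb, G xb = 0 ∧ Filter.Tendsto x Filter.atTop (nhds xb) := by
  have hdist : ∀ xs ∈ {y | G y = 0}, ∃ L, Tendsto (fun k => dist (x k) xs) atTop (𝓝 L) := by
    intro xs hxs
    obtain ⟨L, hL⟩ := hfejer xs hxs
    refine ⟨√L, ?_⟩
    simpa only [Real.sqrt_sq (norm_nonneg _), dist_eq_norm] using hL.sqrt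
  have hlim : ∀ a (φ : ℕ → ℕ), StrictMono φ → Tendsto (x ∘ φ) atTop (𝓝 a) → G a = 0 := by
    intro a φ hφ hsub
    have hGa : Tendsto (fun k => ‖G (x (φ k))‖) atTop (𝓝 ‖G a‖) :=
      ((hG.tendsto a).comp hsub).norm
    exact norm_eq_zero.1 (tendsto_nhds_unique hGa (hres.comp hφ.tendsto_atTop))
  exact exists_tendsto_of_tendsto_dist_of_subseq_limits_mem hzer hdist hlim
end
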